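/- For every α ≥ e (where e is Euler's number), every Facility Location game with β_v > 0 for all nodes v has an α-approximate pure strategy Nash equilibrium: a strategy profile s such that for every agent i and every node v, c_i(s) ≤ α·c_i(s'), where s' agrees with s except that s'_i = v. -/
import Mathlib


open Finset
open scoped Classical

/-- A Facility Location game: nodes `V`, agents `A`, connection costs `d`,
facility opening costs `β`, agent locations `u` and positive weights `w`. -/
structure FLGame (V A : Type*) [Fintype V] [Fintype A] where
  d : V → V → ℝ
  d_nonneg : ∀ x y, 0 ≤ d x y
  β : V → ℝ
  β_nonneg : ∀ v, 0 ≤ β v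
  u : A → V
  w : A → ℝ
  w_pos : ∀ i, 0 < w i
  V_nonempty : Nonempty V
  A_nonempty : Nonempty A

namespace FLGame

variable {V A : Type*} [Fintype V] [Fintype A]

/-- Total weight forwarded to node `v` under profile `s`. -/
noncomputable def Wmass (G : FLGame V A) (s : A → V) (v : V) : ℝ :=
  ∑ j, if s j = v then G.w j else 0

/-- Individual cost of agent `i` under profile `s`. -/
noncomputable def cost (G : FLGame V A) (s : A → V) (i : A) : ℝ :=
  G.w i * G.d (G.u i) (s i) + G.w i * G.β (s i) / G.Wmass s (s i)

/-- Social cost of profile `s`. -/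
noncomputable def social (G : FLGame V A) (s : A → V) : ℝ := ∑ i, G.cost s i

/-- All agents have unit weight. -/
def Unweighted (G : FLGame V A) : Prop := ∀ i, G.w i = 1

/-- `d` is a metric on `V`. -/
def Metric (G : FLGame V A) : Prop :=
  (∀ x, G.d x x = 0) ∧ (∀ x y, G.d x y = G.d y x) ∧ (∀ x y, 0 ≤ G.d x y) ∧
    (∀ x y z, G.d x z ≤ G.d x y + G.d y z)

/-- `s'` is obtained from `s` by a best-response move of agent `i`. -/
def BRMove (G : FLGame V A) (s s' : A → V) (i : A) : Prop :=
  (∀ j, j ≠ i → s' j = s j) ∧ G.cost s' i < G.cost s i ∧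
    (∀ s'' : A → V, (∀ j, j ≠ i → s'' j = s j) → G.cost s' i ≤ G.cost s'' i)

/-- `s` is reached from `s0` by iterative best response. -/
def ReachedByIBR (G : FLGame V A) (s0 s : A → V) : Prop :=
  ∃ (T : ℕ) (seq : ℕ → A → V), seq 0 = s0 ∧ seq T = s ∧
    ∀ t, t < T → ∃ i, G.BRMove (seq t) (seq (t + 1)) i

/-- `s` is a pure Nash equilibrium. -/
def IsPNE (G : FLGame V A) (s : A → V) : Prop :=
  ∀ (i : A) (v : V), G.cost s i ≤ G.cost (Function.update s i v) i

/-- The nonempty coalition `I` deviates from `s` to `s'`, every member improving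
by a factor strictly more than `α`. -/
def CoalDev (G : FLGame V A) (α : ℝ) (s s' : A → V) (I : Finset A) : Prop :=
  I.Nonempty ∧ (∀ j ∉ I, s' j = s j) ∧ ∀ i ∈ I, α * G.cost s' i < G.cost s i

/-- `s` is an `α`-approximate strong equilibrium. -/
def ApproxSE (G : FLGame V A) (α : ℝ) (s : A → V) : Prop :=
  ¬ ∃ (I : Finset A) (s' : A → V), G.CoalDev α s s' I

end FLGame

section Aux

namespace FLGame

variable {V A : Type*} [Fintype V] [Fintype A]

private lemma wmass_nonneg (G : FLGame V A) (s : A → V) (x : V) : 0 ≤ G.Wmass s x := by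
  unfold FLGame.Wmass
  refine Finset.sum_nonneg fun j _ => ?_
  split_ifs
  · exact (G.w_pos j).le
  · exact le_rfl

private lemma le_wmass (G : FLGame V A) (s : A → V) {j : A} {x : V} (h : s j = x) :
    G.w j ≤ G.Wmass s x := by
  unfold FLGame.Wmass
  have h1 : ∀ k ∈ Finset.univ, (0:ℝ) ≤ if s k = x then G.w k else 0 := by
    intro k _
    split_ifs
    · exact (G.w_pos k).le
    · exact le_rfl
  have := Finset.single_le_sum h1 (Finset.mem_univ j)
  simpa [h] using this

private lemma wmass_own_pos (G : FLGame V A) (s : A → V) (j : A) :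
    0 < G.Wmass s (s j) :=
  lt_of_lt_of_le (G.w_pos j) (G.le_wmass s rfl)

private lemma cost_pos (G : FLGame V A) (hβ : ∀ v, 0 < G.β v) (s : A → V) (j : A) :
    0 < G.cost s j := by
  unfold FLGame.cost
  have h1 : 0 ≤ G.w j * G.d (G.u j) (s j) := mul_nonneg (G.w_pos j).le (G.d_nonneg _ _)
  have h2 : 0 < G.w j * G.β (s j) / G.Wmass s (s j) :=
    div_pos (mul_pos (G.w_pos j) (hβ _)) (G.wmass_own_pos s j)
  linarith

private lemma wmass_update [DecidableEq A] (G : FLGame V A) (s : A → V) (i : A) (v x : V) :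
    G.Wmass (Function.update s i v) x
      = G.Wmass s x + (if v = x then G.w i else 0) - (if s i = x then G.w i else 0) := by
  classical
  unfold FLGame.Wmass
  rw [← Finset.sum_erase_add _ _ (Finset.mem_univ i),
      ← Finset.sum_erase_add _ (fun j => if s j = x then G.w j else 0) (Finset.mem_univ i)]
  have hcongr : ∀ j ∈ Finset.univ.erase i,
      (if Function.update s i v j = x then G.w j else 0) = (if s j = x then G.w j else 0) := by
    intro j hj
    rw [Function.update_of_ne (Finset.ne_of_mem_erase hj)]
  rw [Finset.sum_congr rfl hcongr, Function.update_self]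
  ring

end FLGame

end Aux

/-- For every `α ≥ e`, every Facility Location game with positive
facility costs has an `α`-approximate pure strategy Nash equilibrium. -/
theorem stmt12 {V A : Type*} [Fintype V] [Fintype A] [DecidableEq A] (G : FLGame V A)
    (hβ : ∀ v, 0 < G.β v) (α : ℝ) (hα : Real.exp 1 ≤ α) :
    ∃ s : A → V, ∀ (i : A) (v : V),
      G.cost s i ≤ α * G.cost (Function.update s i v) i := by
  classical
  have hαpos : (0:ℝ) < α := lt_of_lt_of_le (Real.exp_pos 1) hα
  have hlogα : (1:ℝ) ≤ Real.log α := (Real.le_log_iff_exp_le hαpos).2 hα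
  have hα1 : (1:ℝ) < α := by
    have h2 : (2:ℝ) ≤ Real.exp 1 := by
      have := Real.add_one_le_exp (1:ℝ); linarith
    linarith
  have hVne : Nonempty V := G.V_nonempty
  have hne : Nonempty (A → V) := ⟨fun _ => Classical.arbitrary V⟩
  obtain ⟨s, hs⟩ :=
    Finite.exists_min (fun t : A → V => ∑ j, G.w j * Real.log (G.cost t j))
  refine ⟨s, fun i v => ?_⟩
  by_contra hcon
  push_neg at hcon
  -- notation
  have hci : 0 < G.cost s i := G.cost_pos hβ s i
  have hci' : 0 < G.cost (Function.update s i v) i := G.cost_pos hβ (Function.update s i v) i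
  have hvne : v ≠ s i := by
    intro h
    rw [h, Function.update_eq_self] at hcon
    nlinarith
  have hsiv : s i ≠ v := fun h => hvne h.symm
  set s' := Function.update s i v with hs'def
  set v₀ := s i with hv₀
  set W := G.Wmass s v₀ with hWdef
  set r := G.Wmass s' v₀ with hrdef
  have hrW : W = r + G.w i := by
    have h := G.wmass_update s i v v₀
    rw [← hs'def, if_neg hvne, if_pos rfl] at h
    rw [hrdef, h, ← hWdef]
    ring
  have hr0 : 0 ≤ r := G.wmass_nonneg s' v₀
  have hWpos : 0 < W := by
    rw [hrW]; have := G.w_pos i; linarith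
  have hWv : G.Wmass s' v = G.Wmass s v + G.w i := by
    have h := G.wmass_update s i v v
    rw [← hs'def, if_pos rfl, if_neg hsiv] at h
    rw [h]; ring
  -- the per-agent correction term
  set E : A → ℝ := fun j =>
    if j = i then -(G.w i * Real.log α)
    else if s j = v₀ then G.w j * (Real.log W - Real.log r) else 0 with hEdef
  -- pointwise bound
  have key : ∀ j, G.w j * Real.log (G.cost s' j) ≤ G.w j * Real.log (G.cost s j) + E j := by
    intro j
    by_cases hj : j = i
    · subst hj
      have hc' : G.cost s' j < G.cost s j / α := by
        rw [lt_div_iff₀ hαpos]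
        linarith [hcon]
      have hlog : Real.log (G.cost s' j) < Real.log (G.cost s j) - Real.log α := by
        have := Real.log_lt_log hci' hc'
        rwa [Real.log_div (ne_of_gt hci) (ne_of_gt hαpos)] at this
      have := mul_le_mul_of_nonneg_left hlog.le (G.w_pos j).le
      simp only [hEdef, if_pos rfl]
      nlinarith [G.w_pos j]
    · have hs'j : s' j = s j := Function.update_of_ne hj _ _
      by_cases hsj : s j = v₀
      · -- source node
        have hrpos : 0 < r := lt_of_lt_of_le (G.w_pos j) (G.le_wmass s' (hs'j.trans hsj))
        have hcost' : G.cost s' j = G.w j * G.d (G.u j) v₀ + G.w j * G.β v₀ / r := by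
          unfold FLGame.cost
          rw [hs'j, hsj, ← hrdef]
        have hcost : G.cost s j = G.w j * G.d (G.u j) v₀ + G.w j * G.β v₀ / W := by
          unfold FLGame.cost
          rw [hsj, ← hWdef]
        have hle : G.cost s' j ≤ G.cost s j * (W / r) := by
          rw [hcost', hcost]
          have hexp : (G.w j * G.d (G.u j) v₀ + G.w j * G.β v₀ / W) * (W / r)
              = G.w j * G.d (G.u j) v₀ * (W / r) + G.w j * G.β v₀ / r := by
            field_simp
          rw [hexp]
          have hone : (1:ℝ) ≤ W / r := by
            rw [le_div_iff₀ hrpos]; have := G.w_pos i; linarith [hrW]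
          have hd0 : 0 ≤ G.w j * G.d (G.u j) v₀ := mul_nonneg (G.w_pos j).le (G.d_nonneg _ _)
          nlinarith
        have hlog : Real.log (G.cost s' j)
            ≤ Real.log (G.cost s j) + (Real.log W - Real.log r) := by
          have h1 := Real.log_le_log (G.cost_pos hβ s' j) hle
          rwa [Real.log_mul (ne_of_gt (G.cost_pos hβ s j)) (ne_of_gt (div_pos hWpos hrpos)),
              Real.log_div (ne_of_gt hWpos) (ne_of_gt hrpos)] at h1
        have := mul_le_mul_of_nonneg_left hlog (G.w_pos j).le
        simp only [hEdef, if_neg hj, if_pos hsj]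
        nlinarith [G.w_pos j]
      · -- not the source node
        simp only [hEdef, if_neg hj, if_neg hsj, add_zero]
        by_cases hsv : s j = v
        · -- target node : cost decreases
          have hc'le : G.cost s' j ≤ G.cost s j := by
            unfold FLGame.cost
            rw [hs'j, hsv]
            have hpos : 0 < G.Wmass s v := by
              have := G.wmass_own_pos s j; rwa [hsv] at this
            have hpos' : 0 < G.Wmass s' v := by rw [hWv]; have := G.w_pos i; linarith
            have hmono : G.Wmass s v ≤ G.Wmass s' v := by
              rw [hWv]; have := G.w_pos i; linarith
            have hnum : 0 ≤ G.w j * G.β v := mul_nonneg (G.w_pos j).le (G.β_nonneg v)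
            have hdiv := div_le_div_of_nonneg_left hnum hpos hmono
            linarith
          have := Real.log_le_log (G.cost_pos hβ s' j) hc'le
          exact mul_le_mul_of_nonneg_left this (G.w_pos j).le
        · -- untouched node : equal cost
          have heq : G.cost s' j = G.cost s j := by
            unfold FLGame.cost
            rw [hs'j]
            have h := G.wmass_update s i v (s j)
            rw [← hs'def, if_neg (fun h' => hsv h'.symm), if_neg (fun h' => hsj h'.symm)] at h
            rw [h]
            ring_nf
          rw [heq]
  -- strict at i
  have keystrict : G.w i * Real.log (G.cost s' i)
      < G.w i * Real.log (G.cost s i) + E i := by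
    have hc' : G.cost s' i < G.cost s i / α := by
      rw [lt_div_iff₀ hαpos]
      linarith [hcon]
    have hlog : Real.log (G.cost s' i) < Real.log (G.cost s i) - Real.log α := by
      have := Real.log_lt_log hci' hc'
      rwa [Real.log_div (ne_of_gt hci) (ne_of_gt hαpos)] at this
    have := mul_lt_mul_of_pos_left hlog (G.w_pos i)
    simp only [hEdef, if_pos rfl]
    nlinarith [G.w_pos i]
  -- sum up
  have hsum : ∑ j, G.w j * Real.log (G.cost s' j)
      < ∑ j, (G.w j * Real.log (G.cost s j) + E j) :=
    Finset.sum_lt_sum (fun j _ => key j) ⟨i, Finset.mem_univ i, keystrict⟩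
  have hEsum : ∑ j, E j ≤ 0 := by
    have hsplit : ∑ j, E j = ∑ j ∈ Finset.univ.erase i, E j + E i :=
      (Finset.sum_erase_add _ _ (Finset.mem_univ i)).symm
    have hEi : E i = -(G.w i * Real.log α) := by simp [hEdef]
    have hrest : ∑ j ∈ Finset.univ.erase i, E j = r * (Real.log W - Real.log r) := by
      have hcongr : ∀ j ∈ Finset.univ.erase i,
          E j = (if s j = v₀ then G.w j else 0) * (Real.log W - Real.log r) := by
        intro j hj
        have hj' : j ≠ i := Finset.ne_of_mem_erase hj
        simp only [hEdef, if_neg hj']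
        by_cases h : s j = v₀ <;> simp [h]
      rw [Finset.sum_congr rfl hcongr, ← Finset.sum_mul]
      have hwsum : ∑ j ∈ Finset.univ.erase i, (if s j = v₀ then G.w j else 0) = r := by
        rw [hrdef]
        unfold FLGame.Wmass
        rw [← Finset.sum_erase_add _ (fun j => if s' j = v₀ then G.w j else 0)
            (Finset.mem_univ i)]
        have hzero : (if s' i = v₀ then G.w i else 0) = 0 := by
          rw [hs'def, Function.update_self, if_neg hvne]
        rw [hzero, add_zero]
        refine Finset.sum_congr rfl fun j hj => ?_
        rw [hs'def, Function.update_of_ne (Finset.ne_of_mem_erase hj)]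
      rw [hwsum]
    have hkey : r * (Real.log W - Real.log r) ≤ G.w i := by
      rcases eq_or_lt_of_le hr0 with h0 | hrpos
      · rw [← h0]; simp [(G.w_pos i).le]
      · have hlogd : Real.log W - Real.log r = Real.log (W / r) :=
          (Real.log_div (ne_of_gt hWpos) (ne_of_gt hrpos)).symm
        have h2 : Real.log (W / r) ≤ W / r - 1 :=
          Real.log_le_sub_one_of_pos (div_pos hWpos hrpos)
        have h3 : r * Real.log (W / r) ≤ r * (W / r - 1) :=
          mul_le_mul_of_nonneg_left h2 hrpos.le
        have h4 : r * (W / r - 1) = G.w i := by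
          field_simp
          linarith [hrW]
        rw [hlogd]
        linarith
    have hwlog : G.w i ≤ G.w i * Real.log α :=
      le_mul_of_one_le_right (G.w_pos i).le hlogα
    rw [hsplit, hrest, hEi]
    linarith
  have hmin : ∑ j, G.w j * Real.log (G.cost s j) ≤ ∑ j, G.w j * Real.log (G.cost s' j) :=
    hs s'
  rw [Finset.sum_add_distrib] at hsum
  linarith
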